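/- arXiv:2302.12703 — 4 statements merged into one kernel-verified Lean document; each statement's English description precedes it below -/
import Mathlib

section
/- Let 𝓛 be a sublattice of 2^[d] and define ρ: 2^[d] → ℤ₊ by ρ(∅) = 0 and ρ(X) = min{ |A| + 1 : X ⊆ A, A ∈ 𝓛 } for ∅ ≠ X ⊆ [d]. Then ρ is submodular: ρ(X) + ρ(Y) ≥ ρ(X ∪ Y) + ρ(X ∩ Y) for all X, Y ⊆ [d]. -/
open Finset

/-- The rank function associated to a sublattice `L` of subsets of `[d]`:
`ρ(∅) = 0` and `ρ(X) = min { |A| + 1 : X ⊆ A, A ∈ L }` for nonempty `X`. -/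
noncomputable def latticeRank {d : ℕ} (L : Set (Finset (Fin d))) (X : Finset (Fin d)) : ℕ :=
  if X = ∅ then 0 else sInf {n : ℕ | ∃ A ∈ L, X ⊆ A ∧ n = A.card + 1}

lemma latticeRank_le {d : ℕ} (L : Set (Finset (Fin d))) {X A : Finset (Fin d)}
    (hA : A ∈ L) (hXA : X ⊆ A) : latticeRank L X ≤ A.card + 1 := by
  unfold latticeRank
  split
  · omega
  · exact Nat.sInf_le ⟨A, hA, hXA, rfl⟩

lemma latticeRank_spec {d : ℕ} (L : Set (Finset (Fin d)))
    (h1 : (Finset.univ : Finset (Fin d)) ∈ L) (X : Finset (Fin d)) (hX : X ≠ ∅) :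
    ∃ A ∈ L, X ⊆ A ∧ latticeRank L X = A.card + 1 := by
  have hne : {n : ℕ | ∃ A ∈ L, X ⊆ A ∧ n = A.card + 1}.Nonempty :=
    ⟨Finset.univ.card + 1, Finset.univ, h1, Finset.subset_univ X, rfl⟩
  have := Nat.sInf_mem hne
  obtain ⟨A, hA, hXA, hEq⟩ := this
  exact ⟨A, hA, hXA, by simp [latticeRank, hX, hEq]⟩

theorem stmt_4 (d : ℕ) (L : Set (Finset (Fin d)))
    (h0 : ∅ ∈ L) (h1 : (Finset.univ : Finset (Fin d)) ∈ L)
    (hcap : ∀ A ∈ L, ∀ B ∈ L, A ∩ B ∈ L)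
    (hcup : ∀ A ∈ L, ∀ B ∈ L, A ∪ B ∈ L) :
    ∀ X Y : Finset (Fin d),
      latticeRank L (X ∪ Y) + latticeRank L (X ∩ Y) ≤
        latticeRank L X + latticeRank L Y := by
  intro X Y
  by_cases hX : X = ∅
  · subst hX; simp [latticeRank]
  by_cases hY : Y = ∅
  · subst hY; simp [latticeRank]
  obtain ⟨A, hA, hXA, hAeq⟩ := latticeRank_spec L h1 X hX
  obtain ⟨B, hB, hYB, hBeq⟩ := latticeRank_spec L h1 Y hY
  have hU : latticeRank L (X ∪ Y) ≤ (A ∪ B).card + 1 :=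
    latticeRank_le L (hcup A hA B hB) (union_subset_union hXA hYB)
  have hcard : (A ∪ B).card + (A ∩ B).card = A.card + B.card :=
    Finset.card_union_add_card_inter A B
  by_cases hI : X ∩ Y = ∅
  · have : latticeRank L (X ∩ Y) = 0 := by simp [latticeRank, hI]
    rw [this, hAeq, hBeq]
    have := Finset.card_union_le A B
    omega
  · have hII : latticeRank L (X ∩ Y) ≤ (A ∩ B).card + 1 :=
      latticeRank_le L (hcap A hA B hB) (inter_subset_inter hXA hYB)
    rw [hAeq, hBeq]
    omega
end

section
/- Let 𝓟 ⊂ ℝ³ be the polytope defined by x₁, x₂, x₃ ≥ 0, x₁ + x₂ ≤ 3, x₂ + x₃ ≤ 3, x₁ + x₂ + x₃ ≤ 4. Then 𝓟 is not the set of independent vectors of any discrete polymatroid on {1,2,3}; equivalently, the set of lattice points of 𝓟 is not a discrete polymatroid, because the maximal lattice points (0,3,0) and (1,2,1) of 𝓟 (with respect to the componentwise order) have different coordinate sums. -/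
open Finset

/-- A discrete polymatroid on `[d]`: a nonempty finite set of nonnegative integer
vectors, downward closed, with the exchange property. -/
def IsDiscretePolymatroid {d : ℕ} (P : Set (Fin d → ℤ)) : Prop :=
  P.Nonempty ∧ P.Finite ∧ (∀ u ∈ P, ∀ i, 0 ≤ u i) ∧
    (∀ u ∈ P, ∀ v : Fin d → ℤ, (∀ i, 0 ≤ v i) → (∀ i, v i ≤ u i) → v ∈ P) ∧
    (∀ u ∈ P, ∀ v ∈ P, (∑ i, u i) < (∑ i, v i) →
      ∃ i, u i < v i ∧ u + Pi.single i 1 ∈ P)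

/-
The exchange axiom forces all maximal elements of a discrete polymatroid to have the same
coordinate sum: from a maximal `u` no step `u + eᵢ` is available, so no `v` can have a larger
sum. Here `(0,3,0)` is maximal with sum 3 while `(1,2,1)` has sum 4.
-/

theorem IsDiscretePolymatroid.sum_le_of_maximal {d : ℕ} {P : Set (Fin d → ℤ)}
    (hP : IsDiscretePolymatroid P) {u v : Fin d → ℤ} (hu : u ∈ P)
    (hmax : ∀ i, u + Pi.single i 1 ∉ P) (hv : v ∈ P) :
    ∑ i, v i ≤ ∑ i, u i := by
  by_contra! hlt
  obtain ⟨i, -, hi⟩ := hP.2.2.2.2 u hu v hv hlt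
  exact hmax i hi

def polytopeLatticePoints : Set (Fin 3 → ℤ) :=
  {u | (∀ i, 0 ≤ u i) ∧ u 0 + u 1 ≤ 3 ∧ u 1 + u 2 ≤ 3 ∧ u 0 + u 1 + u 2 ≤ 4}

instance : DecidablePred (· ∈ polytopeLatticePoints) := fun u => by
  unfold polytopeLatticePoints; infer_instance

theorem mem_polytopeLatticePoints :
    ![0, 3, 0] ∈ polytopeLatticePoints ∧ ![1, 2, 1] ∈ polytopeLatticePoints := by
  decide

theorem add_single_notMem_polytopeLatticePoints (i : Fin 3) :
    ![0, 3, 0] + Pi.single i 1 ∉ polytopeLatticePoints := by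
  revert i
  decide

theorem stmt_7 :
    ¬ IsDiscretePolymatroid
      {u : Fin 3 → ℤ | (∀ i, 0 ≤ u i) ∧ u 0 + u 1 ≤ 3 ∧ u 1 + u 2 ≤ 3 ∧
        u 0 + u 1 + u 2 ≤ 4} := by
  intro hP
  obtain ⟨hu, hv⟩ := mem_polytopeLatticePoints
  have := hP.sum_le_of_maximal hu add_single_notMem_polytopeLatticePoints hv
  simp [Fin.sum_univ_three] at this
end

section
/- Let 𝓐 ⊆ 2^[d] and let 𝓟 = { x ∈ ℝ^d : xᵢ ≥ 0 ∀i, Σ_{i∈A} xᵢ ≤ |A|+1 ∀A ∈ 𝓐 }. Fix a nonempty X ⊆ [d] with |X| = q ≥ 2 and suppose X ∉ 𝓐 and that for all A ∈ 𝓐 either X ⊊ A (so |A| ≥ q+1) or |X ∩ A| < q. Then the point v = (q/(q−1))·Σ_{i∈X} eᵢ belongs to 𝓟, and the coordinate sum of v equals q²/(q−1) > q + 1. -/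
open Finset

theorem stmt_13 (d : ℕ) (𝓐 : Set (Finset (Fin d)))
    (X : Finset (Fin d)) (q : ℕ) (hq : X.card = q) (hq2 : 2 ≤ q)
    (hX : X ∉ 𝓐)
    (hA : ∀ A ∈ 𝓐, (X ⊂ A ∧ q + 1 ≤ A.card) ∨ (X ∩ A).card < q) :
    let v : Fin d → ℝ := fun i => if i ∈ X then (q : ℝ) / (q - 1) else 0
    ((∀ i, 0 ≤ v i) ∧ ∀ A ∈ 𝓐, (∑ i ∈ A, v i) ≤ A.card + 1) ∧
      (∑ i, v i) = (q : ℝ) ^ 2 / (q - 1) ∧ (q : ℝ) + 1 < (q : ℝ) ^ 2 / (q - 1) := by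
  intro v
  have hqr : (2:ℝ) ≤ (q:ℝ) := by exact_mod_cast hq2
  have hpos : (0:ℝ) < (q:ℝ) - 1 := by linarith
  have hsumA : ∀ A : Finset (Fin d),
      (∑ i ∈ A, v i) = ((A ∩ X).card : ℝ) * ((q:ℝ)/((q:ℝ)-1)) := by
    intro A
    simp only [v, Finset.sum_ite_mem, Finset.sum_const, nsmul_eq_mul]
  refine ⟨⟨?_, ?_⟩, ?_, ?_⟩
  · intro i
    simp only [v]
    split
    · positivity
    · exact le_rfl
  · intro A hAm
    have hcardA : ((A ∩ X).card : ℝ) ≤ (A.card : ℝ) := by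
      exact_mod_cast Finset.card_le_card (Finset.inter_subset_left)
    rw [hsumA A]
    rcases hA A hAm with ⟨hsub, hcard⟩ | hlt
    · have hXA : A ∩ X = X := Finset.inter_eq_right.mpr hsub.subset
      rw [hXA, hq]
      have hcardR : (q:ℝ) + 1 ≤ (A.card : ℝ) := by exact_mod_cast hcard
      rw [← mul_div_assoc, div_le_iff₀ hpos]
      nlinarith
    · rw [Finset.inter_comm] at hlt
      have hk : ((A ∩ X).card : ℝ) + 1 ≤ (q:ℝ) := by exact_mod_cast hlt
      rw [← mul_div_assoc, div_le_iff₀ hpos]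
      nlinarith
  · have : (∑ i, v i) = ((Finset.univ ∩ X).card : ℝ) * ((q:ℝ)/((q:ℝ)-1)) := by
      simp only [v, Finset.sum_ite_mem, Finset.sum_const, nsmul_eq_mul]
    rw [this, Finset.univ_inter, hq]
    field_simp
  · rw [lt_div_iff₀ hpos]
    nlinarith
end

section
/- Let 𝓛₁ and 𝓛₂ be sublattices of 2^[d] with associated rank functions ρ_k(X) = min{|A|+1 : X ⊆ A, A ∈ 𝓛_k} (and ρ_k(∅)=0) for k = 1, 2. If ρ₁ = ρ₂ then 𝓛₁ = 𝓛₂. -/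
open Finset

lemma latticeRank_mem_iff {d : ℕ} (L : Set (Finset (Fin d)))
    (hu : (Finset.univ : Finset (Fin d)) ∈ L) (X : Finset (Fin d)) (hX : X ≠ ∅) :
    X ∈ L ↔ latticeRank L X = X.card + 1 := by
  unfold latticeRank
  rw [if_neg hX]
  constructor
  · intro hXL
    have h1 : sInf {n : ℕ | ∃ A ∈ L, X ⊆ A ∧ n = A.card + 1} ≤ X.card + 1 :=
      Nat.sInf_le ⟨X, hXL, subset_rfl, rfl⟩
    have h2 : ∀ n ∈ {n : ℕ | ∃ A ∈ L, X ⊆ A ∧ n = A.card + 1}, X.card + 1 ≤ n := by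
      rintro n ⟨A, hA, hXA, rfl⟩
      exact Nat.add_le_add_right (Finset.card_le_card hXA) 1
    exact le_antisymm h1 (le_csInf ⟨X.card + 1, X, hXL, subset_rfl, rfl⟩ h2)
  · intro h
    have hne : {n : ℕ | ∃ A ∈ L, X ⊆ A ∧ n = A.card + 1}.Nonempty :=
      ⟨Finset.univ.card + 1, Finset.univ, hu, Finset.subset_univ X, rfl⟩
    obtain ⟨A, hA, hXA, hcard⟩ := Nat.sInf_mem hne
    rw [h] at hcard
    have : X = A := Finset.eq_of_subset_of_card_le hXA (by omega)
    rwa [this]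

theorem stmt_18 (d : ℕ) (L₁ L₂ : Set (Finset (Fin d)))
    (h01 : ∅ ∈ L₁) (h11 : (Finset.univ : Finset (Fin d)) ∈ L₁)
    (hcap1 : ∀ A ∈ L₁, ∀ B ∈ L₁, A ∩ B ∈ L₁)
    (hcup1 : ∀ A ∈ L₁, ∀ B ∈ L₁, A ∪ B ∈ L₁)
    (h02 : ∅ ∈ L₂) (h12 : (Finset.univ : Finset (Fin d)) ∈ L₂)
    (hcap2 : ∀ A ∈ L₂, ∀ B ∈ L₂, A ∩ B ∈ L₂)
    (hcup2 : ∀ A ∈ L₂, ∀ B ∈ L₂, A ∪ B ∈ L₂)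
    (heq : latticeRank L₁ = latticeRank L₂) : L₁ = L₂ := by
  ext X
  by_cases hX : X = ∅
  · subst hX; simp [h01, h02]
  · rw [latticeRank_mem_iff L₁ h11 X hX, latticeRank_mem_iff L₂ h12 X hX, heq]
end
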